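/- In a discrete median algebra, the function d(x,y) := |Δ(x,y)| (number of half spaces containing x but not y) is a metric, and it agrees with the path metric of the median graph ΓM in which x,y are adjacent iff [x,y]={x,y}. -/

import Mathlib

/-- A median algebra: a set with a ternary median operation satisfying (Med 1)-(Med 3). -/
structure MedianAlgebra (M : Type*) where
  m : M → M → M → M
  comm₁ : ∀ x y z, m x y z = m x z y
  comm₂ : ∀ x y z, m x y z = m y z x
  idem : ∀ x y, m x x y = x
  assoc : ∀ x y z u v, m (m x y z) u v = m x (m y u v) (m z u v)

namespace MedianAlgebra

variable {M : Type*}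

/-- The interval `[x,y] = {z | z = m x y z}`. -/
def I (A : MedianAlgebra M) (x y : M) : Set M := {z | z = A.m x y z}

/-- A subset is convex if it contains the interval between any two of its points. -/
def Conv (A : MedianAlgebra M) (C : Set M) : Prop :=
  ∀ x ∈ C, ∀ y ∈ C, A.I x y ⊆ C

/-- A half space is a convex set with convex complement. -/
def Halfspace (A : MedianAlgebra M) (H : Set M) : Prop :=
  A.Conv H ∧ A.Conv Hᶜ

/-- The convex hull of a set: the intersection of all convex sets containing it. -/
def hull (A : MedianAlgebra M) (X : Set M) : Set M :=
  ⋂₀ {C | A.Conv C ∧ X ⊆ C}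

/-- The separator `Δ(X,Y)`: half spaces containing `X` and disjoint from `Y`. -/
def sep (A : MedianAlgebra M) (X Y : Set M) : Set (Set M) :=
  {H | A.Halfspace H ∧ X ⊆ H ∧ Y ⊆ Hᶜ}

end MedianAlgebra

/-- Adjacency in the median graph: `x ≠ y` and `[x,y] = {x,y}`. -/
def MedianAlgebra.Adj {M : Type*} (A : MedianAlgebra M) (x y : M) : Prop :=
  x ≠ y ∧ A.I x y = {x, y}

/-! Distinct points are separated by a half space: a convex set maximal among those containing
`x` but not `y` has convex complement, because by maximality `y` lies in the join of that set with
any outside point, and joins of convex sets are convex. Hence `|Δ(x,y)|` vanishes only on the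
diagonal, complementation exchanges `Δ(x,y)` and `Δ(y,x)`, and the triangle inequality holds since
a half space separating `x` from `z` separates `x` from `y` or `y` from `z`. For `z ∈ [x,y]`,
`Δ(x,y)` is the disjoint union of `Δ(x,z)` and `Δ(z,y)`. An edge `{u,v}` is crossed only by the
half space `{w | m u v w = u}`, so no path is shorter than `|Δ|`; conversely a point of
`[x,y] \ {x}` closest to `x` is adjacent to `x`, which builds a path of length `|Δ(x,y)|`. -/

namespace MedianAlgebra

variable {M : Type*} (A : MedianAlgebra M) {a c c₁ c₂ t u v x y z : M}

theorem mem_I : z ∈ A.I x y ↔ A.m x y z = z := eq_comm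

theorem m_right_self (x y : M) : A.m x y y = y := by rw [A.comm₂, A.idem]

theorem m_swap (x y z : M) : A.m x y z = A.m y x z := by rw [A.comm₂, A.comm₁]

theorem I_comm (x y : M) : A.I x y = A.I y x := by
  ext z
  rw [mem_I, mem_I, A.comm₂, A.comm₁]

theorem left_mem_I (x y : M) : x ∈ A.I x y := by
  rw [mem_I, A.comm₁, A.idem]

theorem right_mem_I (x y : M) : y ∈ A.I x y := by
  rw [mem_I, A.m_right_self]

theorem eq_of_mem_I_of_mem_I (h₁ : t ∈ A.I x z) (h₂ : z ∈ A.I x t) : t = z := by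
  rw [mem_I] at h₁ h₂
  rw [← h₁, A.comm₁, h₂]

theorem m_mem_I (x y z : M) : A.m x y z ∈ A.I x y := by
  rw [mem_I]
  have := A.assoc z x y x y
  grind [A.comm₁, A.comm₂, A.idem, A.m_right_self]

theorem m_mem_I_left (x y z : M) : A.m x y z ∈ A.I x z := by
  rw [A.comm₁]
  exact A.m_mem_I x z y

theorem m_mem_I_right (x y z : M) : A.m x y z ∈ A.I y z := by
  rw [A.comm₂]
  exact A.m_mem_I y z x

theorem I_subset_of_mem (hz : z ∈ A.I x y) : A.I x z ⊆ A.I x y := by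
  intro w hw
  rw [mem_I] at *
  have := A.assoc w x z x y
  grind [A.comm₁, A.comm₂, A.idem, A.m_right_self]

theorem eq_m_of_mem_I (h₁ : t ∈ A.I x y) (h₂ : t ∈ A.I y z) (h₃ : t ∈ A.I z x) :
    t = A.m x y z := by
  rw [mem_I] at *
  have := A.assoc y z t x y
  have := A.assoc y y t z x
  grind [A.comm₁, A.comm₂, A.idem]

theorem eq_of_mem_I_inter_I (hy : y ∈ A.I x z) (h₁ : t ∈ A.I x y) (h₂ : t ∈ A.I y z) :
    t = y := by
  have h₃ : t ∈ A.I z x := A.I_comm x z ▸ A.I_subset_of_mem hy h₁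
  rw [A.eq_m_of_mem_I h₁ h₂ h₃, A.comm₁]
  exact A.mem_I.1 hy

/-- The gate property of the projection `z ↦ m x y z` onto `[x,y]`. -/
theorem m_mem_I_of_mem (ht : t ∈ A.I x y) (z : M) : A.m x y z ∈ A.I z t := by
  rw [mem_I] at *
  have := A.assoc x y z z t
  have := A.assoc t x y y z
  have := A.assoc t (A.m x y z) y z x
  have := A.mem_I.1 (A.m_mem_I_left x y z)
  grind [A.comm₁, A.comm₂, A.idem, A.m_right_self]

theorem mem_I_of_mem_I_right (hz : z ∈ A.I u v) (ht : t ∈ A.I z v) : z ∈ A.I u t := by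
  rw [mem_I] at *
  have := A.assoc z v t z u
  grind [A.comm₁, A.comm₂, A.idem]

theorem mem_I_m (h : y ∈ A.I a c) (d : M) : y ∈ A.I a (A.m c d y) := by
  rw [mem_I] at *
  have := A.assoc c d y y a
  have := A.assoc d y a c y
  grind [A.comm₁, A.comm₂, A.idem, A.m_right_self]

theorem conv_setOf_mem_I (e y : M) : A.Conv {w | y ∈ A.I e w} := by
  rintro w₁ (h₁ : y ∈ A.I e w₁) w₂ (h₂ : y ∈ A.I e w₂) w hw
  have hyw : A.m e w y ∈ A.I y w₁ := by
    rw [mem_I] at *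
    have := A.assoc w₁ w₂ w y e
    grind [A.comm₁, A.comm₂]
  exact A.mem_I.2 (A.eq_of_mem_I_inter_I h₁ (A.m_mem_I_left e w y) hyw)

theorem mem_I_m_of_mem_I_of_mem_I (h₁ : u ∈ A.I a c₁) (h₂ : v ∈ A.I a c₂) (hz : z ∈ A.I u v) :
    z ∈ A.I a (A.m c₁ c₂ z) := by
  set p₁ := A.m a c₁ z
  set p₂ := A.m a c₂ z
  have hzu : z ∈ A.I u p₂ := A.mem_I_of_mem_I_right hz (A.m_mem_I_of_mem h₂ z)
  have hzp : z ∈ A.I p₂ p₁ :=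
    A.mem_I_of_mem_I_right (A.I_comm u p₂ ▸ hzu) (A.m_mem_I_of_mem h₁ z)
  have hzY : z ∈ A.I a (A.m c₁ p₂ z) := by
    rw [mem_I] at hzp ⊢
    have := A.assoc a c₁ z z p₂
    grind [A.comm₁, A.comm₂, A.idem]
  have hp₂ : p₂ ∈ A.I z a := by rw [A.I_comm]; exact A.m_mem_I_left a c₂ z
  have hYz : A.m c₁ p₂ z ∈ A.I z p₂ := by rw [A.I_comm]; exact A.m_mem_I_right c₁ p₂ z
  have hY : A.m c₁ p₂ z = z := by
    refine A.eq_of_mem_I_of_mem_I ?_ hzY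
    rw [A.I_comm]
    exact A.I_subset_of_mem hp₂ hYz
  rw [mem_I]
  have := A.assoc a c₂ z z c₁
  grind [A.comm₁, A.comm₂, A.idem]

theorem conv_singleton (x : M) : A.Conv {x} := by
  rintro _ rfl _ rfl z hz
  rw [mem_I, A.idem] at hz
  exact hz.symm

theorem conv_join {C : Set M} (hC : A.Conv C) (a : M) :
    A.Conv {z | ∃ c ∈ C, z ∈ A.I a c} := by
  rintro u ⟨c₁, hc₁, hu⟩ v ⟨c₂, hc₂, hv⟩ z hz
  exact ⟨A.m c₁ c₂ z, hC c₁ hc₁ c₂ hc₂ (A.m_mem_I c₁ c₂ z), A.mem_I_m_of_mem_I_of_mem_I hu hv hz⟩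

theorem conv_sUnion_of_isChain {S : Set (Set M)} (hS : IsChain (· ⊆ ·) S)
    (hconv : ∀ C ∈ S, A.Conv C) : A.Conv (⋃₀ S) := by
  rintro x ⟨C, hC, hxC⟩ y ⟨D, hD, hyD⟩ z hz
  rcases hS.total hC hD with hCD | hDC
  · exact ⟨D, hD, hconv D hD x (hCD hxC) y hyD hz⟩
  · exact ⟨C, hC, hconv C hC x hxC y (hDC hyD) hz⟩

theorem exists_mem_I_of_maximal {C : Set M} (hC : Maximal (fun D => A.Conv D ∧ y ∉ D) C)
    (hx : x ∈ C) {p : M} (hp : p ∉ C) : ∃ c ∈ C, y ∈ A.I p c := by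
  by_contra hy
  have hCJ : C ⊆ {z | ∃ c ∈ C, z ∈ A.I p c} := fun c hc => ⟨c, hc, A.right_mem_I p c⟩
  exact hp (hC.2 ⟨A.conv_join hC.1.1 p, hy⟩ hCJ ⟨x, hx, A.left_mem_I p x⟩)

theorem halfspace_of_maximal {C : Set M} (hC : Maximal (fun D => A.Conv D ∧ y ∉ D) C)
    (hx : x ∈ C) : A.Halfspace C := by
  refine ⟨hC.1.1, fun a ha b hb w hw hwC => ?_⟩
  obtain ⟨c, hc, hac⟩ := A.exists_mem_I_of_maximal hC hx ha
  obtain ⟨d, hd, hbd⟩ := A.exists_mem_I_of_maximal hC hx hb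
  have he : A.m c d y ∈ C := hC.1.1 c hc d hd (A.m_mem_I c d y)
  have hae : y ∈ A.I (A.m c d y) a := by rw [A.I_comm]; exact A.mem_I_m hac d
  have hbe : y ∈ A.I (A.m c d y) b := by
    rw [A.I_comm, ← A.m_swap]; exact A.mem_I_m hbd c
  exact hC.1.2 (hC.1.1 _ he w hwC (A.conv_setOf_mem_I _ y a hae b hbe hw))

theorem exists_halfspace_separating (hxy : x ≠ y) :
    ∃ H, A.Halfspace H ∧ x ∈ H ∧ y ∉ H := by
  obtain ⟨H, hxH, hH⟩ := zorn_subset_nonempty {D | A.Conv D ∧ y ∉ D}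
    (fun S hS hchain _ => ⟨⋃₀ S,
      ⟨A.conv_sUnion_of_isChain hchain fun D hD => (hS hD).1,
        fun ⟨D, hD, hyD⟩ => (hS hD).2 hyD⟩,
      fun D hD => Set.subset_sUnion_of_mem hD⟩)
    {x} ⟨A.conv_singleton x, Ne.symm hxy⟩
  exact ⟨H, A.halfspace_of_maximal hH (hxH rfl), hxH rfl, hH.1.2⟩

theorem mem_sep_singleton {H : Set M} :
    H ∈ A.sep {x} {y} ↔ A.Halfspace H ∧ x ∈ H ∧ y ∉ H := by
  simp [sep]

theorem sep_self (x : M) : A.sep {x} {x} = ∅ := by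
  ext H
  simp [mem_sep_singleton]

theorem sep_nonempty (hxy : x ≠ y) : (A.sep {x} {y}).Nonempty := by
  obtain ⟨H, hH⟩ := A.exists_halfspace_separating hxy
  exact ⟨H, A.mem_sep_singleton.2 hH⟩

theorem Halfspace.compl {H : Set M} (hH : A.Halfspace H) : A.Halfspace Hᶜ :=
  ⟨hH.2, (compl_compl H).symm ▸ hH.1⟩

theorem sep_comm (x y : M) : A.sep {y} {x} = compl '' A.sep {x} {y} := by
  ext H
  rw [Set.mem_compl_image, mem_sep_singleton, mem_sep_singleton, Set.mem_compl_iff,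
    Set.mem_compl_iff, not_not]
  exact ⟨fun ⟨hH, hy, hx⟩ => ⟨hH.compl, hx, hy⟩,
    fun ⟨hH, hx, hy⟩ => ⟨compl_compl H ▸ hH.compl, hy, hx⟩⟩

theorem sep_subset_union (x y z : M) : A.sep {x} {z} ⊆ A.sep {x} {y} ∪ A.sep {y} {z} := by
  intro H hH
  rw [mem_sep_singleton] at hH
  by_cases hy : y ∈ H
  · exact Or.inr (A.mem_sep_singleton.2 ⟨hH.1, hy, hH.2.2⟩)
  · exact Or.inl (A.mem_sep_singleton.2 ⟨hH.1, hH.2.1, hy⟩)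

theorem sep_eq_union_of_mem_I (hz : z ∈ A.I x y) :
    A.sep {x} {y} = A.sep {x} {z} ∪ A.sep {z} {y} := by
  refine (A.sep_subset_union x z y).antisymm (Set.union_subset ?_ ?_) <;> intro H hH <;>
    obtain ⟨hH, h₁, h₂⟩ := A.mem_sep_singleton.1 hH <;> refine A.mem_sep_singleton.2 ⟨hH, ?_, ?_⟩
  · exact h₁
  · exact fun hy => h₂ (hH.1 x h₁ y hy hz)
  · exact by_contra fun hx => hH.2 x hx y h₂ hz h₁
  · exact h₂

theorem disjoint_sep (x y z : M) : Disjoint (A.sep {x} {y}) (A.sep {y} {z}) :=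
  Set.disjoint_left.2 fun _ h₁ h₂ => (A.mem_sep_singleton.1 h₁).2.2 (A.mem_sep_singleton.1 h₂).2.1

def IsDiscrete (A : MedianAlgebra M) : Prop := ∀ x y : M, (A.sep {x} {y}).Finite

noncomputable def sepDist (A : MedianAlgebra M) (x y : M) : ℕ := (A.sep {x} {y}).ncard

section Adj

variable {A}

theorem Adj.eq_of_mem_sep {H : Set M} (h : A.Adj u v) (hH : H ∈ A.sep {u} {v}) :
    H = {w | A.m u v w = u} := by
  obtain ⟨hH, hu, hv⟩ := A.mem_sep_singleton.1 hH
  ext w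
  have hm : A.m u v w ∈ ({u, v} : Set M) := h.2 ▸ A.m_mem_I u v w
  constructor
  · intro hw
    refine hm.resolve_right fun hmv => hv ?_
    exact hmv ▸ hH.1 u hu w hw (A.m_mem_I_left u v w)
  · intro hmu
    by_contra hw
    exact hH.2 v hv w hw (A.m_mem_I_right u v w) (hmu.symm ▸ hu)

theorem Adj.sepDist_le_one (h : A.Adj u v) : A.sepDist u v ≤ 1 := by
  have hs : (A.sep {u} {v}).Subsingleton := fun _ h₁ _ h₂ =>
    (h.eq_of_mem_sep h₁).trans (h.eq_of_mem_sep h₂).symm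
  exact (Set.ncard_le_one hs.finite).2 hs

end Adj

theorem sepDist_self (x : M) : A.sepDist x x = 0 := by
  rw [sepDist, sep_self, Set.ncard_empty]

theorem sepDist_pos (hA : A.IsDiscrete) (hxy : x ≠ y) : 0 < A.sepDist x y :=
  (Set.ncard_pos (hA x y)).2 (A.sep_nonempty hxy)

theorem sepDist_eq_zero_iff (hA : A.IsDiscrete) : A.sepDist x y = 0 ↔ x = y := by
  refine ⟨fun h => by_contra fun hxy => ?_, fun h => h ▸ A.sepDist_self x⟩
  exact (A.sepDist_pos hA hxy).ne' h

theorem sepDist_comm (x y : M) : A.sepDist x y = A.sepDist y x := by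
  rw [sepDist, sepDist, sep_comm, Set.ncard_image_of_injective _ compl_injective]

theorem sepDist_triangle (hA : A.IsDiscrete) (x y z : M) :
    A.sepDist x z ≤ A.sepDist x y + A.sepDist y z :=
  (Set.ncard_le_ncard (A.sep_subset_union x y z) ((hA x y).union (hA y z))).trans
    (Set.ncard_union_le _ _)

theorem sepDist_add_of_mem_I (hA : A.IsDiscrete) (hz : z ∈ A.I x y) :
    A.sepDist x z + A.sepDist z y = A.sepDist x y := by
  rw [sepDist, sepDist, sepDist, A.sep_eq_union_of_mem_I hz,
    Set.ncard_union_eq (A.disjoint_sep x z y) (hA x z) (hA z y)]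

theorem exists_adj_mem_I (hA : A.IsDiscrete) (hxy : x ≠ y) :
    ∃ x', A.Adj x x' ∧ x' ∈ A.I x y := by
  obtain ⟨x', ⟨hx'I, hx'x⟩, hmin⟩ :=
    (measure (A.sepDist x)).wf.has_min (A.I x y \ {x}) ⟨y, A.right_mem_I x y, hxy.symm⟩
  refine ⟨x', ⟨Ne.symm hx'x, Set.Subset.antisymm ?_ ?_⟩, hx'I⟩
  · intro t ht
    by_contra htxx'
    simp only [Set.mem_insert_iff, Set.mem_singleton_iff, not_or] at htxx'
    refine hmin t ⟨A.I_subset_of_mem hx'I ht, htxx'.1⟩ ?_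
    have := A.sepDist_add_of_mem_I hA ht
    have := A.sepDist_pos hA htxx'.2
    show A.sepDist x t < A.sepDist x x'
    omega
  · rintro t (rfl | rfl)
    exacts [A.left_mem_I t x', A.right_mem_I x t]

theorem exists_path_of_sepDist (hA : A.IsDiscrete) {n : ℕ} :
    ∀ {x y : M}, A.sepDist x y = n →
      ∃ f : ℕ → M, f 0 = x ∧ f n = y ∧ ∀ i < n, A.Adj (f i) (f (i + 1)) := by
  induction n with
  | zero =>
    intro x y h
    exact ⟨fun _ => x, rfl, (A.sepDist_eq_zero_iff hA).1 h, fun i hi => absurd hi i.not_lt_zero⟩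
  | succ n ih =>
    intro x y h
    have hxy : x ≠ y := by
      rintro rfl
      rw [sepDist_self] at h
      omega
    obtain ⟨x', hadj, hx'⟩ := A.exists_adj_mem_I hA hxy
    have h₁ := A.sepDist_pos hA hadj.1
    have h₂ := hadj.sepDist_le_one
    have h₃ := A.sepDist_add_of_mem_I hA hx'
    obtain ⟨g, hg₀, hgn, hg⟩ := ih (x := x') (y := y) (by omega)
    refine ⟨fun i => Nat.casesOn (motive := fun _ => M) i x g, rfl, hgn, ?_⟩
    rintro (_ | i) hi
    · show A.Adj x (g 0)
      exact hg₀ ▸ hadj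
    · exact hg i (by omega)

theorem sepDist_le_of_path (hA : A.IsDiscrete) {f : ℕ → M} {n : ℕ}
    (hf : ∀ i < n, A.Adj (f i) (f (i + 1))) : A.sepDist (f 0) (f n) ≤ n := by
  induction n with
  | zero => exact (A.sepDist_self _).le
  | succ n ih =>
    have h₁ := ih fun i hi => hf i (by omega)
    have h₂ := (hf n n.lt_succ_self).sepDist_le_one
    have h₃ := A.sepDist_triangle hA (f 0) (f n) (f (n + 1))
    omega

end MedianAlgebra

/-- In a discrete median algebra, `d(x,y) = |Δ(x,y)|` is a metric agreeing with the
path metric of the median graph. -/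
theorem discrete_metric_eq_path_metric {M : Type*} (A : MedianAlgebra M)
    (hdisc : ∀ x y : M, (A.sep {x} {y}).Finite) :
    (∀ x y : M, (A.sep {x} {y}).ncard = 0 ↔ x = y) ∧
    (∀ x y : M, (A.sep {x} {y}).ncard = (A.sep {y} {x}).ncard) ∧
    (∀ x y z : M, (A.sep {x} {z}).ncard ≤ (A.sep {x} {y}).ncard + (A.sep {y} {z}).ncard) ∧
    (∀ x y : M, IsLeast
      {n : ℕ | ∃ f : ℕ → M, f 0 = x ∧ f n = y ∧ ∀ i < n, A.Adj (f i) (f (i + 1))}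
      (A.sep {x} {y}).ncard) := by
  refine ⟨fun x y => A.sepDist_eq_zero_iff hdisc, A.sepDist_comm, A.sepDist_triangle hdisc,
    fun x y => ⟨A.exists_path_of_sepDist hdisc rfl, ?_⟩⟩
  rintro n ⟨f, rfl, rfl, hf⟩
  exact A.sepDist_le_of_path hdisc hf
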